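/- Let X be a block subspace and ℬ ⊆ E^∞. If player I has a strategy in the infinite asymptotic game F_X to play in ℬ, then for every sequence Δ > 0 there is a block subspace Y ⊆ X such that 𝔅(Y) ⊆ ℬ_Δ. -/

import Mathlib

section Defs

variable {𝔽 : Type} [Field 𝔽] {E : Type} [AddCommGroup E] [Module 𝔽 E]

/-- The support of a vector with respect to the basis `b`. -/
noncomputable def supp (b : Module.Basis ℕ 𝔽 E) (x : E) : Finset ℕ :=
  (b.repr x).support

/-- `VecLt b x y` means `x < y`: every element of the support of `x` is smaller than
every element of the support of `y`. -/
def VecLt (b : Module.Basis ℕ 𝔽 E) (x y : E) : Prop :=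
  ∀ m ∈ supp b x, ∀ n ∈ supp b y, m < n

/-- `NatLt b k x` means `k < x`: `k` is smaller than every element of the support of `x`. -/
def NatLt (b : Module.Basis ℕ 𝔽 E) (k : ℕ) (x : E) : Prop :=
  ∀ n ∈ supp b x, k < n

/-- An infinite block sequence: a sequence of nonzero vectors with `x n < x (n + 1)`. -/
def IsBlockSeq (b : Module.Basis ℕ 𝔽 E) (x : ℕ → E) : Prop :=
  (∀ n, x n ≠ 0) ∧ ∀ n, VecLt b (x n) (x (n + 1))

/-- A finite block sequence: a list of nonzero vectors, consecutively increasing in the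
block ordering. -/
def IsFinBlockSeq (b : Module.Basis ℕ 𝔽 E) (l : List E) : Prop :=
  (∀ x ∈ l, x ≠ 0) ∧ l.Chain' (VecLt b)

/-- A block subspace: a subspace spanned by an infinite block sequence. -/
def IsBlockSubspace (b : Module.Basis ℕ 𝔽 E) (X : Submodule 𝔽 E) : Prop :=
  ∃ y : ℕ → E, IsBlockSeq b y ∧ X = Submodule.span 𝔽 (Set.range y)

/-- The list of the first `n` values of a sequence. -/
def hist {α : Type _} (x : ℕ → α) (n : ℕ) : List α :=
  List.ofFn (fun j : Fin n => x j)

/-- The concatenation of a finite prefix with an infinite sequence. -/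
def prefCat {α : Type _} (l : List α) (x : ℕ → α) : ℕ → α := fun n =>
  if h : n < l.length then l.get ⟨n, h⟩ else x (n - l.length)

/-- Player II has a strategy in Gowers' game `G_X(pre)` below `X` to play in `A`:
player I plays infinite-dimensional subspaces `Y i ≤ X`, player II answers with a
nonzero vector of `Y i`, the vectors played by II forming a block sequence, and the
outcome (the prefix `pre` followed by II's vectors) lies in `A`. -/
def IIWinsG (b : Module.Basis ℕ 𝔽 E) (X : Submodule 𝔽 E) (pre : List E) (A : Set (ℕ → E)) :
    Prop :=
  ∃ σ : List (Submodule 𝔽 E) → E,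
    ∀ Y : ℕ → Submodule 𝔽 E,
      (∀ i, Y i ≤ X ∧ ¬FiniteDimensional 𝔽 ↥(Y i)) →
      (∀ i, σ (hist Y (i + 1)) ∈ Y i ∧ σ (hist Y (i + 1)) ≠ 0 ∧
          VecLt b (σ (hist Y (i + 1))) (σ (hist Y (i + 2)))) ∧
        prefCat pre (fun i => σ (hist Y (i + 1))) ∈ A

/-- Player I has a strategy in the infinite asymptotic game `F_X(pre)` below `X` to play
in `A`: player I plays strictly increasing natural numbers `n i`, player II answers with
nonzero vectors of `X` with `n i < x i` forming a block sequence, and the outcome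
(the prefix `pre` followed by II's vectors) lies in `A`. -/
def IWinsF (b : Module.Basis ℕ 𝔽 E) (X : Submodule 𝔽 E) (pre : List E) (A : Set (ℕ → E)) :
    Prop :=
  ∃ σ : List E → ℕ,
    ∀ x : ℕ → E,
      (∀ i, x i ∈ X ∧ x i ≠ 0 ∧ NatLt b (σ (hist x i)) (x i) ∧
          VecLt b (x i) (x (i + 1))) →
      (∀ i, σ (hist x i) < σ (hist x (i + 1))) ∧ prefCat pre x ∈ A

/-- A set `A ⊆ E^∞` is strategically Ramsey if for every block subspace `V` and every
finite block sequence `z`, there is a block subspace `W ≤ V` such that either II has a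
strategy in `G_W(z)` to play in `A`, or I has a strategy in `F_W(z)` to play in `Aᶜ`. -/
def StrategicallyRamsey (b : Module.Basis ℕ 𝔽 E) (A : Set (ℕ → E)) : Prop :=
  ∀ V : Submodule 𝔽 E, IsBlockSubspace b V → ∀ z : List E, IsFinBlockSeq b z →
    ∃ W : Submodule 𝔽 E, W ≤ V ∧ IsBlockSubspace b W ∧
      (IIWinsG b W z A ∨ IWinsF b W z Aᶜ)

/-- `𝔅(X)`: the set of infinite block sequences of vectors of `X` of norm at most `1`. -/
def BlockSeqIn (b : Module.Basis ℕ 𝔽 E) (Nm : E → ℝ) (X : Submodule 𝔽 E) : Set (ℕ → E) :=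
  {x | IsBlockSeq b x ∧ ∀ i, x i ∈ X ∧ Nm (x i) ≤ 1}

/-- The `Δ`-expansion `A_Δ` of a set `A ⊆ E^∞`. -/
def Expand (Nm : E → ℝ) (Δ : ℕ → ℝ) (A : Set (ℕ → E)) : Set (ℕ → E) :=
  {z | ∃ x ∈ A, ∀ i, Nm (x i - z i) < Δ i}

/-- A set `A ⊆ E^∞` is large if it meets `𝔅(X)` for every block subspace `X`. -/
def Large (b : Module.Basis ℕ 𝔽 E) (Nm : E → ℝ) (A : Set (ℕ → E)) : Prop :=
  ∀ X : Submodule 𝔽 E, IsBlockSubspace b X → (A ∩ BlockSeqIn b Nm X).Nonempty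

end Defs

/-!
Fix, for every finite set `T` of vectors and every `i`, a finite `Δ i`-net of the unit ball of
`span T` consisting of nonzero vectors; it exists because a bounded subset of a finitely
generated space over a subfield of `ℝ` is totally bounded for any seminorm. Thin the block basis
of `X` to a block sequence `y` such that `y j` starts beyond every move of I's strategy `σ` on
the (finitely many) histories of length at most `j` made of net points of spans of
`y 0, …, y (j - 1)`. Given a normalised block sequence `z` of `span (range y)`, replace each
`z i` by a net point `w i` of the span of the `y j` that carry `z i`. Then `w` is a block
sequence, and by the choice of `y` it obeys `σ`, so `w ∈ B`; and `z` is `Δ`-close to `w`.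
-/

open Set Submodule

lemma mul_div_add_one_lt {c δ : ℝ} (hc : 0 ≤ c) (hδ : 0 < δ) : c * (δ / (c + 1)) < δ := by
  rw [mul_div_assoc', div_lt_iff₀ (by linarith)]
  nlinarith

lemma Subfield.totallyBounded_closedBall (𝕂 : Subfield ℝ) (C : ℝ) :
    TotallyBounded (Metric.closedBall (0 : 𝕂) C) :=
  totallyBounded_preimage isUniformEmbedding_subtype_val.isUniformInducing
    (isCompact_closedBall (0 : ℝ) C).totallyBounded

lemma Subfield.exists_ne_zero_norm_lt (𝕂 : Subfield ℝ) {ε : ℝ} (hε : 0 < ε) :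
    ∃ t : 𝕂, t ≠ 0 ∧ ‖t‖ < ε := by
  obtain ⟨n, hn⟩ := exists_nat_one_div_lt hε
  refine ⟨((n : 𝕂) + 1)⁻¹, by positivity, ?_⟩
  change |((n : ℝ) + 1)⁻¹| < ε
  rwa [abs_of_pos (by positivity), ← one_div]

namespace Seminorm

variable {𝕜 E : Type*} [NormedField 𝕜] [AddCommGroup E] [Module 𝕜 E]

def HasFiniteNets (p : Seminorm 𝕜 E) (V : Submodule 𝕜 E) : Prop :=
  ∀ δ > 0, ∀ R : ℝ, ∃ N : Finset E, (N : Set E) ⊆ V ∧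
    ∀ z ∈ V, p z ≤ R → ∃ w ∈ N, p (z - w) < δ

lemma hasFiniteNets_bot (p : Seminorm 𝕜 E) : p.HasFiniteNets ⊥ := fun δ hδ _ =>
  ⟨{0}, by simp, fun z hz _ => ⟨0, Finset.mem_singleton_self 0, by simpa [(mem_bot 𝕜).1 hz]⟩⟩

variable {p : Seminorm 𝕜 E} {V : Submodule 𝕜 E}

lemma HasFiniteNets.sup_span_singleton_of_approx (hV : p.HasFiniteNets V) {x : E}
    (hx : ∀ ε > 0, ∃ v ∈ V, p (x + v) < ε) : p.HasFiniteNets (𝕜 ∙ x ⊔ V) := by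
  intro δ hδ R
  obtain ⟨N, hNV, hN⟩ := hV (δ / 2) (by positivity) (R + δ / 2)
  refine ⟨N, hNV.trans (SetLike.coe_subset_coe.2 le_sup_right), ?_⟩
  rintro _ hz hzR
  obtain ⟨_, hax, v, hv, rfl⟩ := mem_sup.1 hz
  obtain ⟨a, rfl⟩ := mem_span_singleton.1 hax
  obtain ⟨v', hv', hxv'⟩ := hx (δ / 2 / (‖a‖ + 1)) (by positivity)
  set z := a • x + v
  set u := v - a • v'
  have hzu : p (z - u) < δ / 2 := calc
    p (z - u) = ‖a‖ * p (x + v') := by rw [← map_smul_eq_mul]; congr 1; module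
    _ ≤ ‖a‖ * (δ / 2 / (‖a‖ + 1)) := by gcongr
    _ < δ / 2 := mul_div_add_one_lt (norm_nonneg a) (by positivity)
  have hu : p u ≤ R + δ / 2 := by
    have := map_sub_le_add p z (z - u)
    rw [sub_sub_cancel] at this
    linarith
  obtain ⟨w, hwN, hw⟩ := hN u (V.sub_mem hv (V.smul_mem a hv')) hu
  refine ⟨w, hwN, ?_⟩
  calc p (z - w) = p ((z - u) + (u - w)) := by rw [sub_add_sub_cancel]
    _ ≤ p (z - u) + p (u - w) := map_add_le_add p _ _
    _ < δ := by linarith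

lemma norm_mul_le_of_forall_le {x : E} {d : ℝ} (hx : ∀ v ∈ V, d ≤ p (x + v)) (a : 𝕜) {v : E}
    (hv : v ∈ V) : ‖a‖ * d ≤ p (a • x + v) := by
  rcases eq_or_ne a 0 with rfl | ha
  · simp
  calc ‖a‖ * d ≤ ‖a‖ * p (x + a⁻¹ • v) := by gcongr; exact hx _ (V.smul_mem _ hv)
    _ = p (a • x + v) := by rw [← map_smul_eq_mul, smul_add, smul_inv_smul₀ ha]

lemma HasFiniteNets.sup_span_singleton_of_le
    (h𝕜 : ∀ C : ℝ, TotallyBounded (Metric.closedBall (0 : 𝕜) C))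
    (hV : p.HasFiniteNets V) {x : E} {d : ℝ} (hd : 0 < d) (hx : ∀ v ∈ V, d ≤ p (x + v)) :
    p.HasFiniteNets (𝕜 ∙ x ⊔ V) := by
  classical
  intro δ hδ R
  obtain ⟨T, -, hTfin, hT⟩ :=
    Metric.finite_approx_of_totallyBounded (h𝕜 (R / d)) (δ / 2 / (p x + 1)) (by positivity)
  obtain ⟨N, hNV, hN⟩ := hV (δ / 2) (by positivity) (R + R / d * p x)
  refine ⟨(hTfin.toFinset ×ˢ N).image fun q => q.1 • x + q.2, ?_, ?_⟩
  · intro _ h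
    obtain ⟨⟨a, w⟩, hq, rfl⟩ := Finset.mem_image.1 h
    exact add_mem (mem_sup_left (smul_mem _ a (mem_span_singleton_self x)))
      (mem_sup_right (hNV (Finset.mem_product.1 hq).2))
  rintro _ hz hzR
  obtain ⟨_, hax, v, hv, rfl⟩ := mem_sup.1 hz
  obtain ⟨a, rfl⟩ := mem_span_singleton.1 hax
  have ha : ‖a‖ ≤ R / d := by
    rw [le_div_iff₀ hd]
    exact (norm_mul_le_of_forall_le hx a hv).trans hzR
  obtain ⟨a', ha'T, ha'⟩ : ∃ a' ∈ T, ‖a - a'‖ < δ / 2 / (p x + 1) := by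
    simpa [dist_eq_norm] using hT (mem_closedBall_zero_iff.2 ha)
  have hvR : p v ≤ R + R / d * p x := calc
    p v = p ((a • x + v) - a • x) := by rw [add_sub_cancel_left]
    _ ≤ p (a • x + v) + ‖a‖ * p x := by rw [← map_smul_eq_mul]; exact map_sub_le_add p _ _
    _ ≤ R + R / d * p x := by gcongr
  obtain ⟨w, hwN, hw⟩ := hN v hv hvR
  refine ⟨a' • x + w, Finset.mem_image.2 ⟨(a', w), by simp [ha'T, hwN], rfl⟩, ?_⟩
  have hax : ‖a - a'‖ * p x < δ / 2 := calc
    ‖a - a'‖ * p x ≤ δ / 2 / (p x + 1) * p x := by gcongr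
    _ < δ / 2 := by rw [mul_comm]; exact mul_div_add_one_lt (apply_nonneg p x) (by positivity)
  calc p (a • x + v - (a' • x + w)) = p ((a - a') • x + (v - w)) := by congr 1; module
    _ ≤ ‖a - a'‖ * p x + p (v - w) := by rw [← map_smul_eq_mul]; exact map_add_le_add p _ _
    _ < δ := by linarith

/-- Either `x` lies in the `p`-closure of `V`, or it keeps a positive `p`-distance from `V`,
which bounds the coefficient of `x` in the vectors of the `R`-ball of `𝕜 ∙ x ⊔ V`. -/
lemma HasFiniteNets.sup_span_singleton
    (h𝕜 : ∀ C : ℝ, TotallyBounded (Metric.closedBall (0 : 𝕜) C))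
    (hV : p.HasFiniteNets V) (x : E) : p.HasFiniteNets (𝕜 ∙ x ⊔ V) := by
  by_cases hx : ∀ ε > 0, ∃ v ∈ V, p (x + v) < ε
  · exact hV.sup_span_singleton_of_approx hx
  · push Not at hx
    obtain ⟨d, hd, hxd⟩ := hx
    exact hV.sup_span_singleton_of_le h𝕜 hd hxd

lemma hasFiniteNets_span_finset (h𝕜 : ∀ C : ℝ, TotallyBounded (Metric.closedBall (0 : 𝕜) C))
    (p : Seminorm 𝕜 E) (s : Finset E) : p.HasFiniteNets (span 𝕜 s) := by
  classical
  induction s using Finset.induction_on with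
  | empty => simpa using p.hasFiniteNets_bot
  | insert x s _ ih => simpa [span_insert] using ih.sup_span_singleton h𝕜 x

lemma HasFiniteNets.exists_finset_ne_zero (h𝕜 : ∀ ε > 0, ∃ t : 𝕜, t ≠ 0 ∧ ‖t‖ < ε)
    (hV : p.HasFiniteNets V) {δ : ℝ} (hδ : 0 < δ) (R : ℝ) :
    ∃ N : Finset E, (∀ w ∈ N, w ∈ V ∧ w ≠ 0) ∧
      ∀ z ∈ V, z ≠ 0 → p z ≤ R → ∃ w ∈ N, p (z - w) < δ := by
  classical
  by_cases hV0 : ∀ v ∈ V, v = 0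
  · exact ⟨∅, by simp, fun z hz hz0 => absurd (hV0 z hz) hz0⟩
  push Not at hV0
  obtain ⟨v, hvV, hv0⟩ := hV0
  obtain ⟨t, ht0, ht⟩ := h𝕜 (δ / 2 / (p v + 1)) (by positivity)
  have htv : p (t • v) < δ / 2 := calc
    p (t • v) = ‖t‖ * p v := map_smul_eq_mul p t v
    _ ≤ δ / 2 / (p v + 1) * p v := by gcongr
    _ < δ / 2 := by rw [mul_comm]; exact mul_div_add_one_lt (apply_nonneg p v) (by positivity)
  obtain ⟨N, hNV, hN⟩ := hV (δ / 2) (by positivity) R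
  refine ⟨insert (t • v) (N.filter (· ≠ 0)), ?_, fun z hz _ hzR => ?_⟩
  · simp only [Finset.mem_insert, Finset.mem_filter]
    rintro w (rfl | ⟨hwN, hw0⟩)
    · exact ⟨V.smul_mem t hvV, smul_ne_zero ht0 hv0⟩
    · exact ⟨hNV hwN, hw0⟩
  obtain ⟨w, hwN, hw⟩ := hN z hz hzR
  by_cases hw0 : w = 0
  · refine ⟨t • v, Finset.mem_insert_self _ _, ?_⟩
    rw [hw0, sub_zero] at hw
    linarith [map_sub_le_add p z (t • v)]
  · exact ⟨w, Finset.mem_insert_of_mem (Finset.mem_filter.2 ⟨hwN, hw0⟩), by linarith⟩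

end Seminorm

def IsFinsetBlockSeq (S : ℕ → Finset ℕ) : Prop :=
  (∀ k, (S k).Nonempty) ∧ ∀ k, ∀ m ∈ S k, ∀ n ∈ S (k + 1), m < n

namespace IsFinsetBlockSeq

variable {S : ℕ → Finset ℕ}

lemma lt_of_lt (hS : IsFinsetBlockSeq S) {k l : ℕ} (hkl : k < l) {m n : ℕ} (hm : m ∈ S k)
    (hn : n ∈ S l) : m < n := by
  induction l, hkl using Nat.le_induction generalizing n with
  | base => exact hS.2 k m hm n hn
  | succ l _ ih =>
    obtain ⟨m', hm'⟩ := hS.1 l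
    exact (ih hm').trans (hS.2 l m' hm' n hn)

lemma le_of_mem (hS : IsFinsetBlockSeq S) {k n : ℕ} (hn : n ∈ S k) : k ≤ n := by
  induction k generalizing n with
  | zero => exact n.zero_le
  | succ k ih =>
    obtain ⟨m, hm⟩ := hS.1 k
    exact (ih hm).trans_lt (hS.2 k m hm n hn)

end IsFinsetBlockSeq

section Block

variable {𝔽 E : Type} [Field 𝔽] [AddCommGroup E] [Module 𝔽 E] {b : Module.Basis ℕ 𝔽 E}

lemma supp_nonempty (b : Module.Basis ℕ 𝔽 E) {x : E} (hx : x ≠ 0) : (supp b x).Nonempty :=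
  Finsupp.support_nonempty_iff.2 (b.repr.map_ne_zero_iff.2 hx)

lemma exists_mem_supp_of_mem_span {s : Set E} {x : E} (hx : x ∈ span 𝔽 s) {n : ℕ}
    (hn : n ∈ supp b x) : ∃ v ∈ s, n ∈ supp b v := by
  induction hx using span_induction with
  | mem v hv => exact ⟨v, hv, hn⟩
  | zero => simp [supp] at hn
  | add u w _ _ hu hw =>
    simp only [supp, map_add] at hn
    rcases Finset.mem_union.1 (Finsupp.support_add hn) with h | h
    · exact hu h
    · exact hw h
  | smul a u _ hu =>
    simp only [supp, map_smul] at hn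
    exact hu (Finsupp.support_smul hn)

namespace IsBlockSeq

variable {y : ℕ → E}

lemma isFinsetBlockSeq_supp (hy : IsBlockSeq b y) : IsFinsetBlockSeq (supp b ∘ y) :=
  ⟨fun k => supp_nonempty b (hy.1 k), hy.2⟩

lemma vecLt_of_lt (hy : IsBlockSeq b y) {m n : ℕ} (h : m < n) : VecLt b (y m) (y n) :=
  fun _ hp _ hq => hy.isFinsetBlockSeq_supp.lt_of_lt h hp hq

lemma le_of_mem_supp (hy : IsBlockSeq b y) {k n : ℕ} (hn : n ∈ supp b (y k)) : k ≤ n :=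
  hy.isFinsetBlockSeq_supp.le_of_mem hn

lemma notMem_supp_of_ne (hy : IsBlockSeq b y) {j j' : ℕ} (h : j ≠ j') {n : ℕ}
    (hn : n ∈ supp b (y j)) : n ∉ supp b (y j') := fun hn' => by
  rcases h.lt_or_gt with h | h
  · exact lt_irrefl n (hy.vecLt_of_lt h n hn n hn')
  · exact lt_irrefl n (hy.vecLt_of_lt h n hn' n hn)

lemma exists_finset_mem_span (hy : IsBlockSeq b y) {z : E} (hz : z ∈ span 𝔽 (range y)) :
    ∃ S : Finset ℕ, z ∈ span 𝔽 (y '' S) ∧ ∀ j ∈ S, supp b (y j) ⊆ supp b z := by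
  obtain ⟨c, rfl⟩ := Finsupp.mem_span_range_iff_exists_finsupp.1 hz
  refine ⟨c.support, sum_mem fun j hj => smul_mem _ _ (subset_span ⟨j, hj, rfl⟩),
    fun j hj n hn => ?_⟩
  have hcoeff : b.repr (c.sum fun i a => a • y i) n = c j * b.repr (y j) n := by
    simp only [Finsupp.sum, map_sum, map_smul, Finsupp.finsetSum_apply, Finsupp.smul_apply,
      smul_eq_mul]
    refine Finset.sum_eq_single_of_mem j hj fun j' _ hj' => ?_
    rw [Finsupp.notMem_support_iff.1 (hy.notMem_supp_of_ne hj'.symm hn), mul_zero]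
  rw [supp, Finsupp.mem_support_iff, hcoeff]
  exact mul_ne_zero (Finsupp.mem_support_iff.1 hj) (Finsupp.mem_support_iff.1 hn)

lemma lt_of_supp_subset (hy : IsBlockSeq b y) {z z' : E} {j j' : ℕ}
    (hj : supp b (y j) ⊆ supp b z) (hj' : supp b (y j') ⊆ supp b z') (hzz' : VecLt b z z') :
    j < j' := by
  by_contra h
  obtain ⟨m, hm⟩ := supp_nonempty b (hy.1 j)
  rcases (not_lt.1 h).lt_or_eq with hlt | rfl
  · obtain ⟨n, hn⟩ := supp_nonempty b (hy.1 j')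
    exact lt_asymm (hzz' m (hj hm) n (hj' hn)) (hy.vecLt_of_lt hlt n hn m hm)
  · exact lt_irrefl m (hzz' m (hj hm) m (hj' hm))

lemma exists_isFinsetBlockSeq (hy : IsBlockSeq b y) {z : ℕ → E} (hz : IsBlockSeq b z)
    (hzy : ∀ i, z i ∈ span 𝔽 (range y)) :
    ∃ S : ℕ → Finset ℕ, IsFinsetBlockSeq S ∧ ∀ i, z i ∈ span 𝔽 (y '' S i) := by
  choose S hzS hSz using fun i => hy.exists_finset_mem_span (hzy i)
  refine ⟨S, ⟨fun i => ?_, fun i j hj j' hj' => ?_⟩, hzS⟩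
  · refine Finset.nonempty_iff_ne_empty.2 fun hS => hz.1 i ?_
    simpa [hS] using hzS i
  · exact hy.lt_of_supp_subset (hSz i j hj) (hSz (i + 1) j' hj') (hz.2 i)

lemma vecLt_of_mem_span (hy : IsBlockSeq b y) {S T : Finset ℕ}
    (hST : ∀ j ∈ S, ∀ j' ∈ T, j < j') {w w' : E} (hw : w ∈ span 𝔽 (y '' S))
    (hw' : w' ∈ span 𝔽 (y '' T)) : VecLt b w w' := fun m hm n hn => by
  obtain ⟨_, ⟨j, hj, rfl⟩, hmj⟩ := exists_mem_supp_of_mem_span hw hm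
  obtain ⟨_, ⟨j', hj', rfl⟩, hnj'⟩ := exists_mem_supp_of_mem_span hw' hn
  exact hy.vecLt_of_lt (hST j hj j' hj') m hmj n hnj'

end IsBlockSeq

end Block

section Histories

variable {α : Type*}

lemma length_hist (x : ℕ → α) (n : ℕ) : (hist x n).length = n := List.length_ofFn

lemma mem_hist (x : ℕ → α) {m n : ℕ} (h : m < n) : x m ∈ hist x n :=
  List.mem_ofFn.2 ⟨⟨m, h⟩, rfl⟩

lemma hist_succ (x : ℕ → α) (n : ℕ) : hist x (n + 1) = hist x n ++ [x n] := by
  rw [hist, hist, List.ofFn_succ', List.concat_eq_append]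
  rfl

lemma exists_seq_forall_hist {P : List α → α → Prop} (h : ∀ l, ∃ a, P l a) :
    ∃ x : ℕ → α, ∀ n, P (hist x n) (x n) := by
  choose f hf using h
  let g : ℕ → List α := fun n => Nat.rec [] (fun _ l => l ++ [f l]) n
  have hg : ∀ n, g n = hist (fun k => f (g k)) n := by
    intro n
    induction n with
    | zero => rfl
    | succ n ih =>
      change g n ++ [f (g n)] = _
      rw [hist_succ, ← ih]
  exact ⟨fun n => f (g n), fun n => hg n ▸ hf (g n)⟩

@[simp]
lemma prefCat_nil (x : ℕ → α) : prefCat [] x = x := by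
  funext n
  simp [prefCat]

lemma exists_forall_le_of_forall_mem_finset (f : List α → ℕ) (N : Finset α) (n : ℕ) :
    ∃ B, ∀ l : List α, l.length ≤ n → (∀ x ∈ l, x ∈ N) → f l ≤ B := by
  obtain ⟨B, hB⟩ := (((List.finite_length_le N n).image (List.map (↑))).image f).bddAbove
  refine ⟨B, fun l hl hlN => hB ⟨l, ?_, rfl⟩⟩
  lift l to List N using hlN
  exact ⟨l, by simpa using hl, rfl⟩

end Histories

section Game

variable {𝔽 E : Type} [Field 𝔽] [AddCommGroup E] [Module 𝔽 E] {b : Module.Basis ℕ 𝔽 E}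

def IsPlayF (b : Module.Basis ℕ 𝔽 E) (X : Submodule 𝔽 E) (σ : List E → ℕ) (x : ℕ → E) : Prop :=
  ∀ i, x i ∈ X ∧ x i ≠ 0 ∧ NatLt b (σ (hist x i)) (x i) ∧ VecLt b (x i) (x (i + 1))

lemma IsBlockSeq.exists_blockSeq_natLt {u : ℕ → E} (hu : IsBlockSeq b u) (σ : List E → ℕ)
    (F : List E → Finset E) :
    ∃ y : ℕ → E, IsBlockSeq b y ∧ (∀ n, y n ∈ range u) ∧
      ∀ j (l : List E), l.length ≤ j → (∀ x ∈ l, x ∈ F (hist y j)) → NatLt b (σ l) (y j) := by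
  choose B hB using fun l : List E => exists_forall_le_of_forall_mem_finset σ (F l) l.length
  have step : ∀ l : List E, ∃ v, v ∈ range u ∧ (∀ x ∈ l, VecLt b x v) ∧ NatLt b (B l) v := by
    intro l
    let K := B l + (l.map fun x => (supp b x).sup id).sum + 1
    refine ⟨u K, ⟨K, rfl⟩, fun x hx m hm n hn => ?_, fun n hn => ?_⟩
    · have h1 : m ≤ (supp b x).sup id := Finset.le_sup (f := id) hm
      have h2 := List.le_sum_of_mem (List.mem_map_of_mem (f := fun x => (supp b x).sup id) hx)
      have h3 := hu.le_of_mem_supp hn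
      omega
    · have := hu.le_of_mem_supp hn
      omega
  obtain ⟨y, hy⟩ := exists_seq_forall_hist step
  refine ⟨y, ⟨fun n => ?_, fun n => (hy (n + 1)).2.1 _ (mem_hist y n.lt_succ_self)⟩,
    fun n => (hy n).1, fun j l hl hlF n hn => ?_⟩
  · obtain ⟨K, hK⟩ := (hy n).1
    exact hK ▸ hu.1 K
  · exact (hB _ l (by rwa [length_hist]) hlF).trans_lt ((hy j).2.2 n hn)

def netPoints [DecidableEq E] (net : Finset E → ℕ → Finset E) (l : List E) : Finset E :=
  l.toFinset.powerset.biUnion fun T => (Finset.range l.length).biUnion (net T)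

lemma exists_isPlayF_near [DecidableEq E] {Nm : E → ℝ} {Δ : ℕ → ℝ}
    {net : Finset E → ℕ → Finset E}
    (hnet_mem : ∀ (T : Finset E) t, ∀ w ∈ net T t, w ∈ span 𝔽 (T : Set E) ∧ w ≠ 0)
    (hnet : ∀ (T : Finset E) t, ∀ z ∈ span 𝔽 (T : Set E), z ≠ 0 → Nm z ≤ 1 →
      ∃ w ∈ net T t, Nm (z - w) < Δ t)
    {X : Submodule 𝔽 E} {y : ℕ → E} (hy : IsBlockSeq b y) (hyX : ∀ n, y n ∈ X)
    {σ : List E → ℕ}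
    (hσ : ∀ j (l : List E), l.length ≤ j → (∀ x ∈ l, x ∈ netPoints net (hist y j)) →
      NatLt b (σ l) (y j))
    {z : ℕ → E} (hz : z ∈ BlockSeqIn b Nm (span 𝔽 (range y))) :
    ∃ w, IsPlayF b X σ w ∧ ∀ i, Nm (z i - w i) < Δ i := by
  obtain ⟨hzb, hzY⟩ := hz
  obtain ⟨S, hS, hzS⟩ := hy.exists_isFinsetBlockSeq hzb fun i => (hzY i).1
  choose w hw hzw using fun i =>
    hnet ((S i).image y) i (z i) (by simpa using hzS i) (hzb.1 i) (hzY i).2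
  have hwS : ∀ i, w i ∈ span 𝔽 (y '' S i) ∧ w i ≠ 0 := fun i => by
    simpa using hnet_mem _ _ _ (hw i)
  refine ⟨w, fun i => ⟨?_, (hwS i).2, fun n hn => ?_,
    hy.vecLt_of_mem_span (hS.2 i) (hwS i).1 (hwS (i + 1)).1⟩, hzw⟩
  · exact span_le.2 (image_subset_iff.2 fun j _ => hyX j) (hwS i).1
  obtain ⟨_, ⟨j, hj, rfl⟩, hnj⟩ := exists_mem_supp_of_mem_span (hwS i).1 hn
  refine hσ j (hist w i) (by rw [length_hist]; exact hS.le_of_mem hj) ?_ n hnj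
  intro x hx
  obtain ⟨⟨t, ht⟩, rfl⟩ := List.mem_ofFn.1 hx
  have hti : t < j := ht.trans_le (hS.le_of_mem hj)
  simp only [netPoints, Finset.mem_biUnion, Finset.mem_powerset, Finset.mem_range, length_hist]
  refine ⟨(S t).image y, fun v hv => ?_, t, hti, hw t⟩
  obtain ⟨a, ha, rfl⟩ := Finset.mem_image.1 hv
  exact List.mem_toFinset.2 (mem_hist y (hS.lt_of_lt ht ha hj))

end Game

theorem blockSeqIn_subset_expand_of_IWinsF_general
    (𝕂 : Subfield ℝ)
    {E : Type} [AddCommGroup E] [Module 𝕂 E]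
    (b : Module.Basis ℕ 𝕂 E) (Nm : E → ℝ)
    (hNadd : ∀ x y : E, Nm (x + y) ≤ Nm x + Nm y)
    (hNsmul : ∀ (a : 𝕂) (x : E), Nm (a • x) = |(a : ℝ)| * Nm x)
    (X : Submodule 𝕂 E) (hX : IsBlockSubspace b X)
    (B : Set (ℕ → E)) (hB : IWinsF b X [] B)
    (Δ : ℕ → ℝ) (hΔ : ∀ i, 0 < Δ i) :
    ∃ Y : Submodule 𝕂 E, IsBlockSubspace b Y ∧ Y ≤ X ∧
      BlockSeqIn b Nm Y ⊆ Expand Nm Δ B := by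
  classical
  obtain ⟨u, hu, rfl⟩ := hX
  obtain ⟨σ, hσ⟩ := hB
  let p : Seminorm 𝕂 E := Seminorm.of Nm hNadd hNsmul
  choose net hnet_mem hnet using fun (T : Finset E) (t : ℕ) =>
    (p.hasFiniteNets_span_finset 𝕂.totallyBounded_closedBall T).exists_finset_ne_zero
      (fun _ => 𝕂.exists_ne_zero_norm_lt) (hΔ t) 1
  obtain ⟨y, hy, hyu, hyσ⟩ := hu.exists_blockSeq_natLt σ (netPoints net)
  have hyX : ∀ n, y n ∈ span 𝕂 (range u) := fun n => subset_span (hyu n)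
  refine ⟨span 𝕂 (range y), ⟨y, hy, rfl⟩, span_le.2 (range_subset_iff.2 hyX), fun z hz => ?_⟩
  obtain ⟨w, hw, hzw⟩ := exists_isPlayF_near hnet_mem hnet hy hyX hyσ hz
  exact ⟨w, by simpa using (hσ w hw).2, fun i => (map_sub_rev p _ _).trans_lt (hzw i)⟩

theorem blockSeqIn_subset_expand_of_IWinsF
    (𝕂 : Subfield ℝ) [Countable 𝕂]
    {E : Type} [AddCommGroup E] [Module 𝕂 E]
    (b : Module.Basis ℕ 𝕂 E) (Nm : E → ℝ)
    (hN0 : ∀ x : E, Nm x = 0 ↔ x = 0)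
    (hNadd : ∀ x y : E, Nm (x + y) ≤ Nm x + Nm y)
    (hNsmul : ∀ (a : 𝕂) (x : E), Nm (a • x) = |(a : ℝ)| * Nm x)
    (hNval : ∀ x : E, Nm x ∈ 𝕂)
    (X : Submodule 𝕂 E) (hX : IsBlockSubspace b X)
    (B : Set (ℕ → E)) (hB : IWinsF b X [] B)
    (Δ : ℕ → ℝ) (hΔ : ∀ i, 0 < Δ i) :
    ∃ Y : Submodule 𝕂 E, IsBlockSubspace b Y ∧ Y ≤ X ∧
      BlockSeqIn b Nm Y ⊆ Expand Nm Δ B :=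
  blockSeqIn_subset_expand_of_IWinsF_general 𝕂 b Nm hNadd hNsmul X hX B hB Δ hΔ
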